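/- arXiv:2111.05958 — 10 statements merged into one kernel-verified Lean document; each statement's English description precedes it below -/
import Mathlib

section
/- The function t2(p) = 2(7 + 12p + 9p²)/(3 + 6p + 18p³ − 27p⁴) defined for p in the interval [0,1) attains a unique minimum at p = 1/3, where its value is 9/2. -/
/-- Social distancing of three agents on `C₃` with `D = 1`: the expected
absorption time starting from two agents at one node and one at another is
`t2 p = 2(7 + 12p + 9p²) / (3 + 6p + 18p³ - 27p⁴)` for laziness `p ∈ [0,1)`.
This function attains a unique minimum at `p = 1/3`, where its value is `9/2`. -/
theorem social_distance_C3_t2_min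
    (t2 : ℝ → ℝ)
    (ht2 : ∀ p, t2 p = 2 * (7 + 12 * p + 9 * p ^ 2) /
      (3 + 6 * p + 18 * p ^ 3 - 27 * p ^ 4)) :
    t2 (1 / 3) = 9 / 2 ∧
    ∀ p ∈ Set.Ico (0 : ℝ) 1, p ≠ 1 / 3 → t2 (1 / 3) < t2 p := by
  have hval : t2 (1 / 3) = 9 / 2 := by rw [ht2]; norm_num
  refine ⟨hval, ?_⟩
  rintro p ⟨h0, h1⟩ hne
  rw [hval, ht2]
  have hD : 0 < 3 + 6 * p + 18 * p ^ 3 - 27 * p ^ 4 := by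
    nlinarith [mul_pos (sub_pos.mpr h1) (by nlinarith : (0:ℝ) < 9*p^3+3*p^2+3*p+1)]
  rw [div_lt_div_iff₀ (by norm_num : (0:ℝ) < 2) hD]
  have hsq : 0 < (3 * p - 1) ^ 2 := by
    have : 3 * p - 1 ≠ 0 := fun h => hne (by linarith)
    positivity
  nlinarith [sq_nonneg p, mul_pos hsq (by positivity : (0:ℝ) < 27 * p ^ 2 + 1)]
end

section
/- For all p in the open interval (0,1), the derivative of t2(p) = 2(7 + 12p + 9p²)/(3 + 6p + 18p³ − 27p⁴) satisfies t2′(p) = (p − 1/3) · 4 (1 − 6p + 36p² + 54p³ + 27p⁴) / ((p − 1)² (3p + 1)² (3p² + 1)²), and moreover the polynomial 1 − 6p + 36p² + 54p³ + 27p⁴ = (1 − 3p)² + 27p² + 54p³ + 27p⁴ is strictly positive on (0,1). Consequently t2 is strictly decreasing on (0,1/3) and strictly increasing on (1/3,1). -/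
/-!
The denominator of `t2` factors as `-3 (p - 1)(3p + 1)(3p² + 1)`, so the quotient rule writes
`t2'` as `(p - 1/3)` times the quartic `(1 - 3p)² + 27 (p (p + 1))²` over a square; the quartic
is positive because its two squares cannot vanish together. Hence `t2'` has the sign of `p - 1/3`.
-/

open Set

lemma strictAntiOn_Ioo_of_hasDerivAt_neg {f f' : ℝ → ℝ} {a b : ℝ}
    (hf : ∀ x ∈ Ioo a b, HasDerivAt f (f' x) x) (hf' : ∀ x ∈ Ioo a b, f' x < 0) :
    StrictAntiOn f (Ioo a b) :=
  strictAntiOn_of_hasDerivWithinAt_neg (convex_Ioo a b)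
    (fun x hx => (hf x hx).continuousAt.continuousWithinAt)
    (by simpa only [interior_Ioo] using fun x hx => (hf x hx).hasDerivWithinAt)
    (by simpa only [interior_Ioo] using hf')

lemma strictMonoOn_Ioo_of_hasDerivAt_pos {f f' : ℝ → ℝ} {a b : ℝ}
    (hf : ∀ x ∈ Ioo a b, HasDerivAt f (f' x) x) (hf' : ∀ x ∈ Ioo a b, 0 < f' x) :
    StrictMonoOn f (Ioo a b) :=
  strictMonoOn_of_hasDerivWithinAt_pos (convex_Ioo a b)
    (fun x hx => (hf x hx).continuousAt.continuousWithinAt)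
    (by simpa only [interior_Ioo] using fun x hx => (hf x hx).hasDerivWithinAt)
    (by simpa only [interior_Ioo] using hf')

lemma strictAntiOn_strictMonoOn_of_hasDerivAt_sub_mul {f g : ℝ → ℝ} {a b c : ℝ}
    (hac : a ≤ c) (hcb : c ≤ b) (hf : ∀ x ∈ Ioo a b, HasDerivAt f ((x - c) * g x) x)
    (hg : ∀ x ∈ Ioo a b, 0 < g x) :
    StrictAntiOn f (Ioo a c) ∧ StrictMonoOn f (Ioo c b) := by
  have hleft : Ioo a c ⊆ Ioo a b := Ioo_subset_Ioo_right hcb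
  have hright : Ioo c b ⊆ Ioo a b := Ioo_subset_Ioo_left hac
  refine ⟨strictAntiOn_Ioo_of_hasDerivAt_neg (fun x hx => hf x (hleft hx)) fun x hx => ?_,
    strictMonoOn_Ioo_of_hasDerivAt_pos (fun x hx => hf x (hright hx)) fun x hx => ?_⟩
  · exact mul_neg_of_neg_of_pos (sub_neg.mpr hx.2) (hg x (hleft hx))
  · exact mul_pos (sub_pos.mpr hx.1) (hg x (hright hx))

noncomputable def absorptionTimeC3 (p : ℝ) : ℝ :=
  2 * (7 + 12 * p + 9 * p ^ 2) / (3 + 6 * p + 18 * p ^ 3 - 27 * p ^ 4)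

lemma absorptionTimeC3_denom_eq (p : ℝ) :
    3 + 6 * p + 18 * p ^ 3 - 27 * p ^ 4 = -3 * ((p - 1) * (3 * p + 1) * (3 * p ^ 2 + 1)) := by
  ring

lemma quartic_pos (p : ℝ) : 0 < 1 - 6 * p + 36 * p ^ 2 + 54 * p ^ 3 + 27 * p ^ 4 := by
  have hsos : 1 - 6 * p + 36 * p ^ 2 + 54 * p ^ 3 + 27 * p ^ 4 =
      (1 - 3 * p) ^ 2 + 27 * (p * (p + 1)) ^ 2 := by ring
  rw [hsos]
  rcases eq_or_ne p (1 / 3) with rfl | hp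
  · norm_num
  · have : 1 - 3 * p ≠ 0 := fun h => hp (by linarith)
    positivity

lemma hasDerivAt_absorptionTimeC3 {p : ℝ} (hp₁ : p ≠ 1) (hp₂ : 3 * p + 1 ≠ 0) :
    HasDerivAt absorptionTimeC3
      ((p - 1 / 3) * (4 * (1 - 6 * p + 36 * p ^ 2 + 54 * p ^ 3 + 27 * p ^ 4)) /
        ((p - 1) ^ 2 * (3 * p + 1) ^ 2 * (3 * p ^ 2 + 1) ^ 2)) p := by
  have hp₁' : p - 1 ≠ 0 := sub_ne_zero.mpr hp₁
  have hp₃ : 3 * p ^ 2 + 1 ≠ 0 := by positivity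
  have hden : 3 + 6 * p + 18 * p ^ 3 - 27 * p ^ 4 ≠ 0 := by
    rw [absorptionTimeC3_denom_eq]
    simp [hp₁', hp₂, hp₃]
  have hnum : HasDerivAt (fun x : ℝ => 2 * (7 + 12 * x + 9 * x ^ 2)) (2 * (12 + 18 * p)) p :=
    ((((hasDerivAt_id' p).const_mul 12).const_add 7).add
      ((hasDerivAt_pow 2 p).const_mul 9)).const_mul 2 |>.congr_deriv (by norm_num; ring)
  have hdenom : HasDerivAt (fun x : ℝ => 3 + 6 * x + 18 * x ^ 3 - 27 * x ^ 4)
      (6 + 54 * p ^ 2 - 108 * p ^ 3) p :=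
    ((((hasDerivAt_id' p).const_mul 6).const_add 3).add ((hasDerivAt_pow 3 p).const_mul 18)).sub
      ((hasDerivAt_pow 4 p).const_mul 27) |>.congr_deriv (by norm_num; ring)
  refine (hnum.div hdenom hden).congr_deriv ?_
  rw [div_eq_div_iff (pow_ne_zero 2 hden) (by positivity)]
  ring

/-- Social distancing of three agents on `C₃` with `D = 1`: the expected
absorption time from two agents at one node and one at another is
`t2 p = 2(7 + 12p + 9p²) / (3 + 6p + 18p³ - 27p⁴)`.  For `p ∈ (0,1)` its
derivative is `(p - 1/3) · 4(1 - 6p + 36p² + 54p³ + 27p⁴) /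
((p - 1)² (3p + 1)² (3p² + 1)²)`; the quartic `1 - 6p + 36p² + 54p³ + 27p⁴`
equals `(1 - 3p)² + 27p² + 54p³ + 27p⁴` and is strictly positive on `(0,1)`.
Consequently `t2` is strictly decreasing on `(0,1/3)` and strictly increasing
on `(1/3,1)`. -/
theorem social_distance_C3_t2_deriv
    (t2 : ℝ → ℝ)
    (ht2 : ∀ p, t2 p = 2 * (7 + 12 * p + 9 * p ^ 2) /
      (3 + 6 * p + 18 * p ^ 3 - 27 * p ^ 4)) :
    (∀ p ∈ Set.Ioo (0 : ℝ) 1,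
      HasDerivAt t2
        ((p - 1 / 3) * (4 * (1 - 6 * p + 36 * p ^ 2 + 54 * p ^ 3 + 27 * p ^ 4)) /
          ((p - 1) ^ 2 * (3 * p + 1) ^ 2 * (3 * p ^ 2 + 1) ^ 2)) p) ∧
    (∀ p ∈ Set.Ioo (0 : ℝ) 1,
      1 - 6 * p + 36 * p ^ 2 + 54 * p ^ 3 + 27 * p ^ 4 =
        (1 - 3 * p) ^ 2 + 27 * p ^ 2 + 54 * p ^ 3 + 27 * p ^ 4 ∧
      0 < 1 - 6 * p + 36 * p ^ 2 + 54 * p ^ 3 + 27 * p ^ 4) ∧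
    StrictAntiOn t2 (Set.Ioo (0 : ℝ) (1 / 3)) ∧
    StrictMonoOn t2 (Set.Ioo (1 / 3 : ℝ) 1) := by
  obtain rfl : t2 = absorptionTimeC3 := funext ht2
  have hderiv : ∀ p ∈ Ioo (0 : ℝ) 1, HasDerivAt absorptionTimeC3
      ((p - 1 / 3) * (4 * (1 - 6 * p + 36 * p ^ 2 + 54 * p ^ 3 + 27 * p ^ 4)) /
        ((p - 1) ^ 2 * (3 * p + 1) ^ 2 * (3 * p ^ 2 + 1) ^ 2)) p :=
    fun p hp => hasDerivAt_absorptionTimeC3 hp.2.ne (by linarith [hp.1])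
  refine ⟨hderiv, fun p _ => ⟨by ring, quartic_pos p⟩,
    strictAntiOn_strictMonoOn_of_hasDerivAt_sub_mul
      (g := fun p => 4 * (1 - 6 * p + 36 * p ^ 2 + 54 * p ^ 3 + 27 * p ^ 4) /
        ((p - 1) ^ 2 * (3 * p + 1) ^ 2 * (3 * p ^ 2 + 1) ^ 2)) (by norm_num) (by norm_num)
      (fun p hp => (hderiv p hp).congr_deriv (mul_div_assoc ..)) fun p ⟨hp₀, hp₁⟩ => ?_⟩
  have : p - 1 ≠ 0 := by linarith
  have := quartic_pos p
  positivity
end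

section
/- The function t3(p) = 4(4 + 3p + 9p²)/(3(1 + 3p + p² + p³ − 6p⁴)) defined for p in the interval [0,1) attains a unique minimum at p = 1/3, where its value is 27/7. -/
/-- Gathering (multiple sticky rendezvous) of three agents on `C₃`: the
expected absorption time starting from all three agents at distinct nodes is
`t3 p = 4(4 + 3p + 9p²) / (3(1 + 3p + p² + p³ - 6p⁴))` for laziness
`p ∈ [0,1)`.  This function attains a unique minimum at `p = 1/3`, where its
value is `27/7`. -/
theorem gathering_C3_t3_min
    (t3 : ℝ → ℝ)
    (ht3 : ∀ p, t3 p = 4 * (4 + 3 * p + 9 * p ^ 2) /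
      (3 * (1 + 3 * p + p ^ 2 + p ^ 3 - 6 * p ^ 4))) :
    t3 (1 / 3) = 27 / 7 ∧
    ∀ p ∈ Set.Ico (0 : ℝ) 1, p ≠ 1 / 3 → t3 (1 / 3) < t3 p := by
  have hval : t3 (1 / 3) = 27 / 7 := by rw [ht3]; norm_num
  refine ⟨hval, ?_⟩
  rintro p ⟨hp0, hp1⟩ hne
  rw [hval, ht3]
  have hD : 0 < 3 * (1 + 3 * p + p ^ 2 + p ^ 3 - 6 * p ^ 4) := by
    have h1 : 0 < 1 - p := by linarith
    have hQ : (0:ℝ) < 6 * p ^ 3 + 5 * p ^ 2 + 4 * p + 1 := by positivity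
    nlinarith [mul_pos h1 hQ]
  rw [div_lt_div_iff₀ (by norm_num) hD]
  have hsq : 0 < (3 * p - 1) ^ 2 := by
    have : 3 * p - 1 ≠ 0 := fun h => hne (by linarith)
    positivity
  nlinarith [sq_nonneg p, mul_pos hsq (by nlinarith : (0:ℝ) < 54 * p ^ 2 + 27 * p + 31)]
end

section
/- For all p in the open interval (0,1), the derivative of t3(p) = 4(4 + 3p + 9p²)/(3(1 + 3p + p² + p³ − 6p⁴)) satisfies t3′(p) = 4(3p − 1)(9 + 17p + 39p² + 27p³ + 36p⁴) / (3(−6p⁴ + p³ + p² + 3p + 1)²). Consequently t3 is strictly decreasing on (0,1/3) and strictly increasing on (1/3,1). -/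
/-!
The derivative is the quotient rule applied to `N / (3 D)` with
`N = 4 (4 + 3p + 9p²)` and `D = 1 + 3p + p² + p³ - 6p⁴`. On `(0, 1)` the denominator does not
vanish because `D = (1 - p)(1 + 4p + 5p² + 6p³)`, and the second factor of the numerator has
positive coefficients, so the sign of `t3'` is the sign of `3p - 1`.
-/

open Set

namespace GatheringC3

lemma den_eq (p : ℝ) :
    1 + 3 * p + p ^ 2 + p ^ 3 - 6 * p ^ 4 = (1 - p) * (1 + 4 * p + 5 * p ^ 2 + 6 * p ^ 3) := by
  ring

lemma den_pos {p : ℝ} (h0 : 0 ≤ p) (h1 : p < 1) : 0 < 1 + 3 * p + p ^ 2 + p ^ 3 - 6 * p ^ 4 := by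
  rw [den_eq]
  exact mul_pos (sub_pos.2 h1) (by positivity)

lemma hasDerivAt_t3 {p : ℝ} (hD : 1 + 3 * p + p ^ 2 + p ^ 3 - 6 * p ^ 4 ≠ 0) :
    HasDerivAt
      (fun x : ℝ => 4 * (4 + 3 * x + 9 * x ^ 2) / (3 * (1 + 3 * x + x ^ 2 + x ^ 3 - 6 * x ^ 4)))
      (4 * (3 * p - 1) * (9 + 17 * p + 39 * p ^ 2 + 27 * p ^ 3 + 36 * p ^ 4) /
        (3 * (-6 * p ^ 4 + p ^ 3 + p ^ 2 + 3 * p + 1) ^ 2)) p := by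
  have hx := hasDerivAt_id' p
  have hN : HasDerivAt (fun x : ℝ => 4 * (4 + 3 * x + 9 * x ^ 2)) (4 * (3 * 1 + 9 * (2 * p ^ 1))) p :=
    (((hx.const_mul 3).const_add 4).add ((hasDerivAt_pow 2 p).const_mul 9)).const_mul 4
  have hDen : HasDerivAt (fun x : ℝ => 3 * (1 + 3 * x + x ^ 2 + x ^ 3 - 6 * x ^ 4))
      (3 * (3 * 1 + 2 * p ^ 1 + 3 * p ^ 2 - 6 * (4 * p ^ 3))) p :=
    (((((hx.const_mul 3).const_add 1).add (hasDerivAt_pow 2 p)).add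
      (hasDerivAt_pow 3 p)).sub ((hasDerivAt_pow 4 p).const_mul 6)).const_mul 3
  refine (hN.div hDen (mul_ne_zero three_ne_zero hD)).congr_deriv ?_
  have hD' : -6 * p ^ 4 + p ^ 3 + p ^ 2 + 3 * p + 1 ≠ 0 := by
    convert hD using 1; ring
  rw [div_eq_div_iff (by positivity) (by positivity)]
  ring

lemma quartic_pos {p : ℝ} (h0 : 0 ≤ p) : 0 < 9 + 17 * p + 39 * p ^ 2 + 27 * p ^ 3 + 36 * p ^ 4 := by
  positivity

lemma deriv_denom_pos {p : ℝ} (h0 : 0 ≤ p) (h1 : p < 1) :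
    0 < 3 * (-6 * p ^ 4 + p ^ 3 + p ^ 2 + 3 * p + 1) ^ 2 := by
  have := den_pos h0 h1
  have : 0 < -6 * p ^ 4 + p ^ 3 + p ^ 2 + 3 * p + 1 := by linarith
  positivity

end GatheringC3

open GatheringC3 in
/-- Gathering of three agents on `C₃`: the expected absorption time starting
from all three agents at distinct nodes is
`t3 p = 4(4 + 3p + 9p²) / (3(1 + 3p + p² + p³ - 6p⁴))`.  For `p ∈ (0,1)` its
derivative is `4(3p - 1)(9 + 17p + 39p² + 27p³ + 36p⁴) /
(3(-6p⁴ + p³ + p² + 3p + 1)²)`.  Consequently `t3` is strictly decreasing on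
`(0,1/3)` and strictly increasing on `(1/3,1)`. -/
theorem gathering_C3_t3_deriv
    (t3 : ℝ → ℝ)
    (ht3 : ∀ p, t3 p = 4 * (4 + 3 * p + 9 * p ^ 2) /
      (3 * (1 + 3 * p + p ^ 2 + p ^ 3 - 6 * p ^ 4))) :
    (∀ p ∈ Set.Ioo (0 : ℝ) 1,
      HasDerivAt t3
        (4 * (3 * p - 1) * (9 + 17 * p + 39 * p ^ 2 + 27 * p ^ 3 + 36 * p ^ 4) /
          (3 * (-6 * p ^ 4 + p ^ 3 + p ^ 2 + 3 * p + 1) ^ 2)) p) ∧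
    StrictAntiOn t3 (Set.Ioo (0 : ℝ) (1 / 3)) ∧
    StrictMonoOn t3 (Set.Ioo (1 / 3 : ℝ) 1) := by
  obtain rfl : t3 = _ := funext ht3
  have hderiv : ∀ p ∈ Ioo (0 : ℝ) 1, HasDerivAt _ _ p := fun p hp =>
    hasDerivAt_t3 (den_pos hp.1.le hp.2).ne'
  refine ⟨hderiv, ?_, ?_⟩
  · refine strictAntiOn_Ioo_of_hasDerivAt_neg (fun p hp => hderiv p ⟨hp.1, by linarith [hp.2]⟩)
      fun p ⟨h0, h1⟩ => div_neg_of_neg_of_pos ?_ (deriv_denom_pos h0.le (by linarith))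
    exact mul_neg_of_neg_of_pos (by linarith) (quartic_pos h0.le)
  · refine strictMonoOn_Ioo_of_hasDerivAt_pos (fun p hp => hderiv p ⟨by linarith [hp.1], hp.2⟩)
      fun p ⟨h0, h1⟩ => div_pos ?_ (deriv_denom_pos (by linarith) h1)
    exact mul_pos (by linarith) (quartic_pos (by linarith))
end

section
/- The function t(p) = (20p + 4)/((1 − p)(1 + 10p + 5p²)) defined for p in the interval [0,1) attains a unique minimum at p = 1/5, where its value is 25/8. -/
/-- Social distancing of two agents on `Cₙ` (`n ≥ 5`) with `D = 2`, common
lazy random walk: the expected time to reach graph distance at least `2`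
starting from adjacent nodes is `t p = (20p + 4) / ((1 - p)(1 + 10p + 5p²))`
for laziness `p ∈ [0,1)`.  This function attains a unique minimum at
`p = 1/5`, where its value is `25/8`. -/
theorem social_distance_Cn_adjacent_min
    (t : ℝ → ℝ)
    (ht : ∀ p, t p = (20 * p + 4) / ((1 - p) * (1 + 10 * p + 5 * p ^ 2))) :
    t (1 / 5) = 25 / 8 ∧
    ∀ p ∈ Set.Ico (0 : ℝ) 1, p ≠ 1 / 5 → t (1 / 5) < t p := by
  have hval : t (1 / 5) = 25 / 8 := by rw [ht]; norm_num
  refine ⟨hval, ?_⟩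
  intro p hp hne
  rw [hval, ht]
  have h1 : (0:ℝ) < 1 - p := by linarith [hp.2]
  have h2 : (0:ℝ) < 1 + 10 * p + 5 * p ^ 2 := by nlinarith [hp.1, sq_nonneg p]
  have hd : 0 < (1 - p) * (1 + 10 * p + 5 * p ^ 2) := mul_pos h1 h2
  rw [div_lt_div_iff₀ (by norm_num) hd]
  have h3 : (0:ℝ) < (5 * p - 1) ^ 2 := by
    have : 5 * p - 1 ≠ 0 := fun h => hne (by linarith)
    positivity
  have h4 : (0:ℝ) < 5 * p + 7 := by linarith [hp.1]
  nlinarith [mul_pos h3 h4]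
end

section
/- The function t2(p,r) = ( (12r + 4)/(1 − p) + 8p/(1 − r) ) / (1 + 3r + p(7 + 5r)), defined for (p,r) ∈ [0,1) × [0,1), attains its minimum at r = 0 and p = (√33 − 5)/2, where its value is (15 + √33)/8. -/
/-- Social distancing of two agents on `Cₙ` (`n ≥ 5`) with `D = 2`, using a
population-dependent lazy random walk (laziness `p` when alone, `r` when
sharing a node).  The expected time to reach distance at least `2` starting
from adjacent nodes is
`t2 p r = ((12r + 4)/(1 - p) + 8p/(1 - r)) / (1 + 3r + p(7 + 5r))` on
`[0,1) × [0,1)`.  It attains its minimum at `r = 0`, `p = (√33 - 5)/2`, where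
its value is `(15 + √33)/8`. -/
theorem social_distance_Cn_population_dependent_min
    (t2 : ℝ → ℝ → ℝ)
    (ht2 : ∀ p r, t2 p r =
      ((12 * r + 4) / (1 - p) + 8 * p / (1 - r)) / (1 + 3 * r + p * (7 + 5 * r))) :
    t2 ((Real.sqrt 33 - 5) / 2) 0 = (15 + Real.sqrt 33) / 8 ∧
    ∀ p ∈ Set.Ico (0 : ℝ) 1, ∀ r ∈ Set.Ico (0 : ℝ) 1,
      (15 + Real.sqrt 33) / 8 ≤ t2 p r := by
  have hs2 : Real.sqrt 33 ^ 2 = 33 := Real.sq_sqrt (by norm_num)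
  have h5 : (5:ℝ) < Real.sqrt 33 := by
    nlinarith [Real.sqrt_nonneg 33, hs2]
  have h6 : Real.sqrt 33 < 6 := by
    nlinarith [Real.sqrt_nonneg 33, hs2]
  set s := Real.sqrt 33 with hs
  constructor
  · rw [ht2]
    have e1 : (12 * 0 + 4 : ℝ) / (1 - (s - 5) / 2) = (7 + s) / 2 := by
      rw [div_eq_iff (by intro h; nlinarith)]
      linear_combination (1/4) * hs2
    rw [e1, div_eq_div_iff (by intro h; nlinarith) (by norm_num : (8:ℝ) ≠ 0)]
    linear_combination (-7/2) * hs2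
  · intro p hp r hr
    obtain ⟨hp0, hp1⟩ := hp
    obtain ⟨hr0, hr1⟩ := hr
    rw [ht2]
    have hP : (0:ℝ) < 1 - p := by linarith
    have hR : (0:ℝ) < 1 - r := by linarith
    have hR' : (0:ℝ) ≤ 1 - r := le_of_lt hR
    have hP' : (0:ℝ) ≤ 1 - p := le_of_lt hP
    have key : (12 * r + 4) / (1 - p) + 8 * p / (1 - r)
        = ((12 * r + 4) * (1 - r) + 8 * p * (1 - p)) / ((1 - p) * (1 - r)) := by
      field_simp
    have hQ : (0:ℝ) < 1 + 3 * r + p * (7 + 5 * r) := by nlinarith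
    rw [key, div_div, div_le_div_iff₀ (by norm_num) (by positivity)]
    have h1 : 0 ≤ (1 - r) * ((41 + 7*s)/4 * (2*p+5-s)^2) := by positivity
    have h2 : 0 ≤ r * (64 * p * (1 - p)) := by positivity
    have h3 : 0 ≤ r * (1 - r) * (96 - (15 + s) * (1 - p) * (3 + 5*p)) := by
      have hb : (15 + s) * (1 - p) * (3 + 5*p) ≤ 96 := by
        nlinarith [sq_nonneg (5*p - 1)]
      have := mul_nonneg hr0 hR'
      nlinarith
    have keyid : ((12 * r + 4) * (1 - r) + 8 * p * (1 - p)) * 8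
        - (15 + s) * ((1 - p) * (1 - r) * (1 + 3 * r + p * (7 + 5 * r)))
        = (1 - r) * ((41 + 7*s)/4 * (2*p+5-s)^2) + r * (64 * p * (1 - p))
          + r * (1 - r) * (96 - (15 + s) * (1 - p) * (3 + 5*p)) := by
      linear_combination ((1-r)*(29/4 - 7*s/4 + 7*p)) * hs2
    linarith
end

section
/- For (p,r) ∈ (0,1) × [0,1), let t1(p,r) and t2(p,r) be the unique solution of the linear system t1 = 1 + (r² + (1 − r)²/2)·t1 + 2r(1 − r)·t2 and t2 = 1 + p(1 − p)·t1 + (p² + (1 − p)²)·t2. Then the minimum of t1 over this domain equals 2, attained at (p,r) = (1/2, 0), and the minimum of t2 over this domain equals 3, also attained at (p,r) = (1/2, 0). -/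
/-- Social distancing of two agents on `C₄` with `D = 2`, population-dependent
lazy random walk (laziness `p` when alone, `r` when sharing a node).  For
`(p,r) ∈ (0,1) × [0,1)` the first-step linear system
`t1 = 1 + (r² + (1-r)²/2) t1 + 2r(1-r) t2`,
`t2 = 1 + p(1-p) t1 + (p² + (1-p)²) t2`
has a unique solution `(t1 p r, t2 p r)`.  The minimum of `t1` over this
domain equals `2`, attained at `(p,r) = (1/2, 0)`, and the minimum of `t2`
equals `3`, also attained at `(p,r) = (1/2, 0)`. -/
theorem social_distance_C4_min
    (t1 t2 : ℝ → ℝ → ℝ)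
    (hsys : ∀ p ∈ Set.Ioo (0 : ℝ) 1, ∀ r ∈ Set.Ico (0 : ℝ) 1,
      t1 p r = 1 + (r ^ 2 + (1 - r) ^ 2 / 2) * t1 p r + 2 * r * (1 - r) * t2 p r ∧
      t2 p r = 1 + p * (1 - p) * t1 p r + (p ^ 2 + (1 - p) ^ 2) * t2 p r) :
    (∀ p ∈ Set.Ioo (0 : ℝ) 1, ∀ r ∈ Set.Ico (0 : ℝ) 1,
      ∃! x : ℝ × ℝ,
        x.1 = 1 + (r ^ 2 + (1 - r) ^ 2 / 2) * x.1 + 2 * r * (1 - r) * x.2 ∧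
        x.2 = 1 + p * (1 - p) * x.1 + (p ^ 2 + (1 - p) ^ 2) * x.2) ∧
    (∀ p ∈ Set.Ioo (0 : ℝ) 1, ∀ r ∈ Set.Ico (0 : ℝ) 1, 2 ≤ t1 p r ∧ 3 ≤ t2 p r) ∧
    t1 (1 / 2) 0 = 2 ∧ t2 (1 / 2) 0 = 3 := by
  refine ⟨?_, ?_, ?_, ?_⟩
  · intro p hp r hr
    obtain ⟨h1, h2⟩ := hsys p hp r hr
    have hc : 0 < p * (1 - p) := mul_pos hp.1 (by linarith [hp.2])
    have hr2 : 0 < 1 - r ^ 2 := by nlinarith [hr.1, hr.2]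
    refine ⟨(t1 p r, t2 p r), ⟨h1, h2⟩, ?_⟩
    rintro ⟨y1, y2⟩ ⟨e1, e2⟩
    simp only [Prod.mk.injEq]
    have key : p * (1 - p) * (1 - r ^ 2) * (y1 - t1 p r) = 0 := by
      linear_combination (2 * p * (1 - p)) * e1 - (2 * p * (1 - p)) * h1 +
        (2 * r * (1 - r)) * e2 - (2 * r * (1 - r)) * h2
    have hu : y1 = t1 p r := by
      have h0 := (mul_eq_zero.mp key).resolve_left (mul_ne_zero hc.ne' hr2.ne')
      linarith [sub_eq_zero.mp h0]
    have hv : y2 = t2 p r := by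
      have key2 : 2 * (p * (1 - p)) * (y2 - t2 p r) = 0 := by
        linear_combination e2 - h2 + (p * (1 - p)) * hu
      have h0 := (mul_eq_zero.mp key2).resolve_left
        (mul_ne_zero two_ne_zero hc.ne')
      linarith [sub_eq_zero.mp h0]
    exact ⟨hu, hv⟩
  · intro p hp r hr
    obtain ⟨h1, h2⟩ := hsys p hp r hr
    have hc : 0 < p * (1 - p) := mul_pos hp.1 (by linarith [hp.2])
    have hr2 : 0 < 1 - r ^ 2 := by nlinarith [hr.1, hr.2]
    have key1 : p * (1 - p) * (1 - r ^ 2) * t1 p r = 2 * (p * (1 - p)) + 2 * r * (1 - r) := by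
      linear_combination (2 * p * (1 - p)) * h1 + (2 * r * (1 - r)) * h2
    have hpos : 0 < p * (1 - p) * (1 - r ^ 2) := mul_pos hc hr2
    have hB : (0:ℝ) ≤ 2 * r * (1 - r) :=
      mul_nonneg (by linarith [hr.1]) (by linarith [hr.2])
    have hCr2 : (0:ℝ) ≤ p * (1 - p) * r ^ 2 := by positivity
    have ht1 : 2 ≤ t1 p r := by
      nlinarith [key1, hpos, hB, hCr2]
    refine ⟨ht1, ?_⟩
    have key2 : 2 * (p * (1 - p)) * t2 p r = 1 + p * (1 - p) * t1 p r := by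
      linear_combination h2
    nlinarith [sq_nonneg (1 - 2 * p), mul_le_mul_of_nonneg_left ht1 hc.le]
  · have h := hsys (1/2) ⟨by norm_num, by norm_num⟩ 0 ⟨le_refl 0, by norm_num⟩
    obtain ⟨h1, h2⟩ := h
    norm_num at h1
    linarith
  · have h := hsys (1/2) ⟨by norm_num, by norm_num⟩ 0 ⟨le_refl 0, by norm_num⟩
    obtain ⟨h1, h2⟩ := h
    norm_num at h1 h2
    linarith
end

section
/- The function t4(p) = (8 + 40p)/(1 + 9p − 5p² − 5p³) defined for p in the interval [0,1) attains a unique minimum at p = 1/5, where its value is 25/4. -/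
/-- Gathering of three agents on `C₅`: the expected absorption time starting
from the state `(0,2)` (two agents at one node, third at distance `2`) is
`t4 p = (8 + 40p) / (1 + 9p - 5p² - 5p³)` for laziness `p ∈ [0,1)`.  This
function attains a unique minimum at `p = 1/5`, where its value is `25/4`. -/
theorem gathering_C5_t4_min
    (t4 : ℝ → ℝ)
    (ht4 : ∀ p, t4 p = (8 + 40 * p) / (1 + 9 * p - 5 * p ^ 2 - 5 * p ^ 3)) :
    t4 (1 / 5) = 25 / 4 ∧
    ∀ p ∈ Set.Ico (0 : ℝ) 1, p ≠ 1 / 5 → t4 (1 / 5) < t4 p := by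
  have hval : t4 (1 / 5) = 25 / 4 := by rw [ht4]; norm_num
  refine ⟨hval, ?_⟩
  intro p hp hne
  rw [hval, ht4]
  have hp0 : 0 ≤ p := hp.1
  have hp1 : p < 1 := hp.2
  have hD : 0 < 1 + 9 * p - 5 * p ^ 2 - 5 * p ^ 3 := by
    nlinarith [mul_pos (show (0:ℝ) < 1 - p by linarith)
      (show (0:ℝ) < 5 * p ^ 2 + 10 * p + 1 by nlinarith)]
  rw [div_lt_div_iff₀ (by norm_num) hD]
  have hne' : 5 * p - 1 ≠ 0 := by intro h; apply hne; linarith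
  have h2 : 0 < (5 * p - 1) ^ 2 := by positivity
  nlinarith [mul_pos h2 (show (0:ℝ) < 5 * p + 7 by linarith)]
end

section
/- The polynomial P(s) = 14 − 15s − 117s² − 33s³ − 5s⁴ + 60s⁵ has exactly one root in the interval [0,1], and this root lies in the open interval (0,1). -/
private lemma poly_uniq : ∀ s t : ℝ, s ∈ Set.Icc (0:ℝ) 1 → t ∈ Set.Icc (0:ℝ) 1 →
    14 - 15 * s - 117 * s ^ 2 - 33 * s ^ 3 - 5 * s ^ 4 + 60 * s ^ 5 = 0 →
    14 - 15 * t - 117 * t ^ 2 - 33 * t ^ 3 - 5 * t ^ 4 + 60 * t ^ 5 = 0 → s = t := by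
  intro s t ⟨hs0, hs1⟩ ⟨ht0, ht1⟩ hfs hft
  by_contra hne
  have h : (s - t) * (-15 - 117*(s+t) - 33*(s^2+s*t+t^2)
      - 5*(s^3+s^2*t+s*t^2+t^3) + 60*(s^4+s^3*t+s^2*t^2+s*t^3+t^4)) = 0 := by ring_nf; nlinarith [hfs, hft]
  rcases mul_eq_zero.mp h with h1 | h2
  · exact hne (by linarith)
  · have h1s : (0:ℝ) ≤ 1 - s := by linarith
    have h1t : (0:ℝ) ≤ 1 - t := by linarith
    nlinarith [mul_nonneg (mul_nonneg hs0 hs0) (mul_nonneg h1s (by linarith : (0:ℝ) ≤ 1+s)),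
      mul_nonneg (mul_nonneg ht0 ht0) (mul_nonneg h1t (by linarith : (0:ℝ) ≤ 1+t)),
      mul_nonneg (mul_nonneg hs0 ht0) (mul_nonneg h1s (by linarith : (0:ℝ) ≤ 1+s)),
      mul_nonneg (mul_nonneg hs0 ht0) (mul_nonneg h1t (by linarith : (0:ℝ) ≤ 1+t)),
      mul_nonneg (mul_nonneg hs0 ht0) (mul_nonneg h1s h1t),
      mul_nonneg hs0 h1s, mul_nonneg ht0 h1t, mul_nonneg hs0 ht0,
      mul_nonneg (mul_nonneg hs0 hs0) (mul_nonneg ht0 ht0)]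

/-- The fifth-degree polynomial `P(s) = 14 - 15s - 117s² - 33s³ - 5s⁴ + 60s⁵`
(characterizing the searchers' optimal laziness `s*` in the search game of two
searchers and one hider on `C₃`) has exactly one root in `[0,1]`, and this
root lies in the open interval `(0,1)`. -/
theorem search_game_C3_optimal_laziness_unique_root :
    (∃! s : ℝ, s ∈ Set.Icc (0 : ℝ) 1 ∧
      14 - 15 * s - 117 * s ^ 2 - 33 * s ^ 3 - 5 * s ^ 4 + 60 * s ^ 5 = 0) ∧
    ∀ s : ℝ, s ∈ Set.Icc (0 : ℝ) 1 →
      14 - 15 * s - 117 * s ^ 2 - 33 * s ^ 3 - 5 * s ^ 4 + 60 * s ^ 5 = 0 →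
      s ∈ Set.Ioo (0 : ℝ) 1 := by
  set f : ℝ → ℝ := fun s => 14 - 15 * s - 117 * s ^ 2 - 33 * s ^ 3 - 5 * s ^ 4 + 60 * s ^ 5 with hf
  have hcont : ContinuousOn f (Set.Icc (0:ℝ) 1) := by fun_prop
  have hsub : Set.Ioo (f 1) (f 0) ⊆ f '' (Set.Ioo 0 1) :=
    intermediate_value_Ioo' (by norm_num) hcont
  have h0 : (0:ℝ) ∈ Set.Ioo (f 1) (f 0) := by simp [hf]; norm_num
  obtain ⟨s, hsIoo, hfs⟩ := hsub h0
  refine ⟨⟨s, ⟨Set.mem_Icc_of_Ioo hsIoo, hfs⟩, ?_⟩, ?_⟩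
  · rintro t ⟨htIcc, hft⟩
    exact poly_uniq t s htIcc (Set.mem_Icc_of_Ioo hsIoo) hft hfs
  · intro t htIcc hft
    have := poly_uniq t s htIcc (Set.mem_Icc_of_Ioo hsIoo) hft hfs
    rwa [this]
end

section
/- For every p ∈ [0,1), the linear system B = p² + (1/4)(1 − p)²·A + (1/4)(1 − p)² and A = (1 − p)²·B + p² has a unique solution (A(p), B(p)), and A(p) = (1 − 4p + 14p² − 12p³ + 5p⁴)/(3 + 4p − 6p² + 4p³ − p⁴). Moreover A(p) > 1/3 for every p ∈ (1/2, 1), and A(1/2) = 1/3. -/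
/-- First-to-disperse game `G₁(3)` on `L₃`: two players use common laziness
`p` and the remaining player always moves, forgoing the prize in ties.  For
every `p ∈ [0,1)` the first-step system
`B = p² + (1/4)(1-p)² A + (1/4)(1-p)²`, `A = (1-p)² B + p²`
has a unique solution `(A(p), B(p))`, with
`A(p) = (1 - 4p + 14p² - 12p³ + 5p⁴)/(3 + 4p - 6p² + 4p³ - p⁴)`.
Moreover `A(p) > 1/3` for every `p ∈ (1/2, 1)`, and `A(1/2) = 1/3`. -/
theorem first_to_disperse_mover_payoff :
    (∀ p ∈ Set.Ico (0 : ℝ) 1,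
      (∃! x : ℝ × ℝ,
        x.2 = p ^ 2 + (1 / 4) * (1 - p) ^ 2 * x.1 + (1 / 4) * (1 - p) ^ 2 ∧
        x.1 = (1 - p) ^ 2 * x.2 + p ^ 2) ∧
      ∀ A B : ℝ,
        (B = p ^ 2 + (1 / 4) * (1 - p) ^ 2 * A + (1 / 4) * (1 - p) ^ 2 ∧
         A = (1 - p) ^ 2 * B + p ^ 2) →
        A = (1 - 4 * p + 14 * p ^ 2 - 12 * p ^ 3 + 5 * p ^ 4) /
            (3 + 4 * p - 6 * p ^ 2 + 4 * p ^ 3 - p ^ 4)) ∧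
    (∀ p ∈ Set.Ioo (1 / 2 : ℝ) 1,
      (1 : ℝ) / 3 < (1 - 4 * p + 14 * p ^ 2 - 12 * p ^ 3 + 5 * p ^ 4) /
        (3 + 4 * p - 6 * p ^ 2 + 4 * p ^ 3 - p ^ 4)) ∧
    ((1 - 4 * (1 / 2 : ℝ) + 14 * (1 / 2 : ℝ) ^ 2 - 12 * (1 / 2 : ℝ) ^ 3 +
        5 * (1 / 2 : ℝ) ^ 4) /
      (3 + 4 * (1 / 2 : ℝ) - 6 * (1 / 2 : ℝ) ^ 2 + 4 * (1 / 2 : ℝ) ^ 3 -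
        (1 / 2 : ℝ) ^ 4) = 1 / 3) := by

  have hden : ∀ p : ℝ, p ∈ Set.Ico (0:ℝ) 1 → 0 < 3 + 4 * p - 6 * p ^ 2 + 4 * p ^ 3 - p ^ 4 := by
    intro p ⟨h0, h1⟩
    nlinarith [sq_nonneg (1 - p), sq_nonneg p, sq_nonneg ((1-p)^2), pow_le_one₀ (by linarith : (0:ℝ) ≤ 1 - p) (by linarith : 1 - p ≤ 1) (n := 4)]
  have key : ∀ p ∈ Set.Ico (0:ℝ) 1, ∀ A B : ℝ,
      (B = p ^ 2 + (1 / 4) * (1 - p) ^ 2 * A + (1 / 4) * (1 - p) ^ 2 ∧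
       A = (1 - p) ^ 2 * B + p ^ 2) →
      A = (1 - 4 * p + 14 * p ^ 2 - 12 * p ^ 3 + 5 * p ^ 4) /
          (3 + 4 * p - 6 * p ^ 2 + 4 * p ^ 3 - p ^ 4) := by
    intro p hp A B ⟨h1, h2⟩
    have hd := hden p hp
    rw [eq_div_iff hd.ne']
    linear_combination 4 * h2 + (1 - p) ^ 2 * 4 * h1
  refine ⟨fun p hp => ?_, fun p hp => ?_, by norm_num⟩
  · have hd := hden p hp
    set N := (1 - 4 * p + 14 * p ^ 2 - 12 * p ^ 3 + 5 * p ^ 4) with hN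
    set D := (3 + 4 * p - 6 * p ^ 2 + 4 * p ^ 3 - p ^ 4) with hD
    refine ⟨⟨⟨N / D, p ^ 2 + (1 / 4) * (1 - p) ^ 2 * (N / D) + (1 / 4) * (1 - p) ^ 2⟩,
      ⟨rfl, ?_⟩, ?_⟩, key p hp⟩
    · show N / D = _
      field_simp
      ring
    · rintro ⟨A, B⟩ ⟨h1, h2⟩
      have hA : A = N / D := key p hp A B ⟨h1, h2⟩
      simp only [Prod.mk.injEq]
      exact ⟨hA, by simp only [] at h1; rw [h1, hA]⟩
  · obtain ⟨h0, h1⟩ := hp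
    have hd := hden p ⟨by linarith, h1⟩
    rw [lt_div_iff₀ hd]
    nlinarith [mul_pos (mul_pos (by linarith : (0:ℝ) < p) (by linarith : (0:ℝ) < 2*p - 1)) (by nlinarith [sq_nonneg (p-1)] : (0:ℝ) < (p-1)^2 + 1)]
end
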